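/- Let A be a bounded operator with closed range on a complex Hilbert space H, λ ∈ [0,1], r ≥ 1, and u a unit vector. Then |⟨Au,u⟩|^(2r) ≤ (λ/2)⟨(|A|^(4r) + (AA†)^r)u,u⟩ + ((1−λ)/2)|⟨Au,u⟩|^r · ⟨(|A|^(2r) + (AA†)^r)u,u⟩. -/

import Mathlib

set_option synthInstance.maxHeartbeats 1000000
set_option maxHeartbeats 1000000

open scoped InnerProductSpace
open ContinuousLinearMap

section Aux
open scoped NNReal
variable {H : Type*} [NormedAddCommGroup H] [InnerProductSpace ℂ H] [CompleteSpace H]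

lemma aux_inner_re_nonneg (S : H →L[ℂ] H) (hS : 0 ≤ S) (u : H) :
    0 ≤ (⟪S u, u⟫_ℂ).re :=
  (Complex.nonneg_iff.mp (((nonneg_iff_isPositive S).mp hS).inner_nonneg_left u)).1

lemma aux_inner_re_mono {S T : H →L[ℂ] H} (h : S ≤ T) (u : H) :
    (⟪S u, u⟫_ℂ).re ≤ (⟪T u, u⟫_ℂ).re := by
  have h2 := ((le_def S T).mp h).inner_nonneg_left u
  simp only [reApplyInnerSelf, sub_apply, inner_sub_left, map_sub, RCLike.re_to_complex] at h2 ⊢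
  have h3 := (Complex.nonneg_iff.mp h2).1
  rw [Complex.sub_re] at h3
  linarith

lemma aux_inner_add (S T : H →L[ℂ] H) (u : H) :
    (⟪(S + T) u, u⟫_ℂ).re = (⟪S u, u⟫_ℂ).re + (⟪T u, u⟫_ℂ).re := by
  simp [inner_add_left]

lemma aux_tangent {c x p : ℝ} (hc : 0 < c) (hx : 0 ≤ x) (hp : 1 ≤ p) :
    c ^ p + p * c ^ (p - 1) * (x - c) ≤ x ^ p := by
  have hcp : (0:ℝ) < c ^ p := Real.rpow_pos_of_pos hc p
  have hs : (-1:ℝ) ≤ x / c - 1 := by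
    have : 0 ≤ x / c := div_nonneg hx hc.le
    linarith
  have hber := one_add_mul_self_le_rpow_one_add hs hp
  have h1 : (1 : ℝ) + (x / c - 1) = x / c := by ring
  rw [h1, Real.div_rpow hx hc.le] at hber
  have key := mul_le_mul_of_nonneg_left hber hcp.le
  have e1 : c ^ p * (x ^ p / c ^ p) = x ^ p := by field_simp
  have e2 : c ^ p * (1 + p * (x / c - 1)) = c ^ p + p * (c ^ p / c) * (x - c) := by
    field_simp
  have h2 : c ^ (p - 1) = c ^ p / c := by
    rw [Real.rpow_sub hc, Real.rpow_one]
  rw [h2]; rw [e1, e2] at key; linarith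

lemma aux_holder_mccarthy (S : H →L[ℂ] H) (hS : 0 ≤ S) {p : ℝ} (hp : 1 ≤ p)
    (u : H) (hu : ‖u‖ = 1) :
    (⟪S u, u⟫_ℂ).re ^ p ≤ (⟪(S ^ p) u, u⟫_ℂ).re := by
  have hp0 : p ≠ 0 := by linarith
  set c := (⟪S u, u⟫_ℂ).re with hc
  have hc0 : 0 ≤ c := aux_inner_re_nonneg S hS u
  rcases hc0.eq_or_lt with h0 | hcpos
  · rw [← h0, Real.zero_rpow hp0]
    exact aux_inner_re_nonneg _ CFC.rpow_nonneg u
  · set a₀ : ℝ := c ^ p - p * c ^ (p - 1) * c with ha₀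
    set b₀ : ℝ := p * c ^ (p - 1) with hb₀
    have hcont : ContinuousOn (fun x : ℝ => ((x.toNNReal ^ p : ℝ≥0) : ℝ))
        (spectrum ℝ S) := by
      apply Continuous.continuousOn
      exact NNReal.continuous_coe.comp
        ((NNReal.continuous_rpow_const (by linarith)).comp continuous_real_toNNReal)
    have hSp_eq : S ^ p = cfc (fun x : ℝ => ((x.toNNReal ^ p : ℝ≥0) : ℝ)) S := by
      rw [CFC.rpow_def, cfc_nnreal_eq_real _ _ hS]
    have hsa : IsSelfAdjoint S := .of_nonneg hS
    have haff : cfc (fun x : ℝ => a₀ + b₀ * x) S = algebraMap ℝ _ a₀ + b₀ • S := by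
      rw [cfc_const_add a₀ (fun x => b₀ * x) S (by fun_prop) hsa, cfc_const_mul_id b₀ S hsa]
    have hle : cfc (fun x : ℝ => a₀ + b₀ * x) S
        ≤ cfc (fun x : ℝ => ((x.toNNReal ^ p : ℝ≥0) : ℝ)) S := by
      refine cfc_mono (fun x hx => ?_) (by fun_prop) hcont
      have hx0 : 0 ≤ x := spectrum_nonneg_of_nonneg hS hx
      have he : ((x.toNNReal ^ p : ℝ≥0) : ℝ) = x ^ p := by
        rw [NNReal.coe_rpow, Real.coe_toNNReal x hx0]
      rw [he]
      have ht := aux_tangent hcpos hx0 hp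
      nlinarith [ht]
    have e1 : (algebraMap ℝ (H →L[ℂ] H) a₀) u = (a₀ : ℂ) • u := by
      rw [Algebra.algebraMap_eq_smul_one, smul_apply, one_apply_eq_self,
        RCLike.real_smul_eq_coe_smul (K := ℂ) a₀ u]
      norm_cast
    have e2 : (b₀ • S) u = (b₀ : ℂ) • S u := by
      rw [smul_apply, RCLike.real_smul_eq_coe_smul (K := ℂ) b₀ (S u)]
      norm_cast
    have hval : (⟪(algebraMap ℝ (H →L[ℂ] H) a₀ + b₀ • S) u, u⟫_ℂ).re = a₀ + b₀ * c := by
      rw [add_apply, e1, e2, inner_add_left]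
      simp only [inner_smul_left, Complex.conj_ofReal, Complex.add_re, Complex.mul_re,
        Complex.ofReal_re, Complex.ofReal_im, inner_self_eq_norm_sq_to_K, hu]
      rw [← hc]
      norm_num
    have hkey : c ^ p = a₀ + b₀ * c := by simp only [ha₀, hb₀]; ring
    calc c ^ p = a₀ + b₀ * c := hkey
      _ = (⟪(cfc (fun x : ℝ => a₀ + b₀ * x) S) u, u⟫_ℂ).re := by rw [haff, hval]
      _ ≤ (⟪(cfc (fun x : ℝ => ((x.toNNReal ^ p : ℝ≥0) : ℝ)) S) u, u⟫_ℂ).re :=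
          aux_inner_re_mono hle u
      _ = (⟪(S ^ p) u, u⟫_ℂ).re := by rw [← hSp_eq]

lemma aux_idem_rpow (P : H →L[ℂ] H) (hsa : IsSelfAdjoint P) (hP2 : P * P = P)
    {p : ℝ} (hp : p ≠ 0) : P ^ p = P := by
  have hP0 : 0 ≤ P := by
    have := star_mul_self_nonneg P
    rwa [hsa.star_eq, hP2] at this
  have hspec : ∀ x ∈ spectrum ℝ P, x = 0 ∨ x = 1 := by
    intro x hx
    have hmem : x ^ 2 - x ∈ spectrum ℝ ((Polynomial.aeval P) ((Polynomial.X : Polynomial ℝ) ^ 2 - Polynomial.X)) :=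
      spectrum.subset_polynomial_aeval P ((Polynomial.X : Polynomial ℝ) ^ 2 - Polynomial.X)
        ⟨x, hx, by simp⟩
    have haev : (Polynomial.aeval P) ((Polynomial.X : Polynomial ℝ) ^ 2 - Polynomial.X) = 0 := by
      simp [sq, hP2]
    rw [haev] at hmem
    by_contra hcon
    push_neg at hcon
    have hne : x ^ 2 - x ≠ 0 := by
      intro h
      rcases mul_eq_zero.mp (by linear_combination h : x * (x - 1) = 0) with h' | h'
      · exact hcon.1 h'
      · exact hcon.2 (by linarith)
    have : IsUnit (algebraMap ℝ (H →L[ℂ] H) (x ^ 2 - x) - 0) := by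
      rw [sub_zero]
      exact (IsUnit.map (algebraMap ℝ (H →L[ℂ] H)) (isUnit_iff_ne_zero.mpr hne))
    exact spectrum.mem_iff.mp hmem this
  have h1 : P ^ p = cfc (fun x : ℝ => ((x.toNNReal ^ p : ℝ≥0) : ℝ)) P := by
    rw [CFC.rpow_def, cfc_nnreal_eq_real _ _ hP0]
  rw [h1]
  have h2 : cfc (fun x : ℝ => ((x.toNNReal ^ p : ℝ≥0) : ℝ)) P = cfc (id : ℝ → ℝ) P := by
    apply cfc_congr
    intro x hx
    rcases hspec x hx with h | h <;> simp [h, NNReal.zero_rpow hp]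
  rw [h2, cfc_id ℝ P hsa]

lemma aux_scalar {t x y α a' lam r : ℝ} (ht0 : 0 ≤ t) (hx0 : 0 ≤ x) (hy0 : 0 ≤ y)
    (hy1 : y ≤ 1) (htxy : t ≤ x * y) (hcr : (x ^ 2) ^ r ≤ α) (hα : α ^ 2 ≤ a')
    (hr : 1 ≤ r) (hl0 : 0 ≤ lam) (hl1 : lam ≤ 1) :
    t ^ (2 * r) ≤ lam / 2 * (a' + y ^ 2) + (1 - lam) / 2 * t ^ r * (α + y ^ 2) := by
  have hr0 : (0:ℝ) ≤ r := by linarith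
  have htr0 : 0 ≤ t ^ r := Real.rpow_nonneg ht0 r
  have hα0 : 0 ≤ α := le_trans (Real.rpow_nonneg (by positivity) r) hcr
  have h1 : t ^ r ≤ x ^ r * y ^ r := by
    rw [← Real.mul_rpow hx0 hy0]
    exact Real.rpow_le_rpow ht0 htxy hr0
  have hxr : (x ^ r) ^ 2 = (x ^ 2) ^ r := by
    rw [← Real.rpow_natCast (x ^ r) 2, ← Real.rpow_mul hx0, ← Real.rpow_natCast x 2,
      ← Real.rpow_mul hx0, mul_comm]
  have hyr : (y ^ r) ^ 2 = (y ^ 2) ^ r := by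
    rw [← Real.rpow_natCast (y ^ r) 2, ← Real.rpow_mul hy0, ← Real.rpow_natCast y 2,
      ← Real.rpow_mul hy0, mul_comm]
  have hy2r : (y ^ 2) ^ r ≤ y ^ 2 := by
    rcases eq_or_lt_of_le hy0 with h | h
    · rw [← h]
      rw [show ((0:ℝ) ^ 2 : ℝ) = 0 by norm_num, Real.zero_rpow (by linarith : r ≠ 0)]
    · calc (y ^ 2) ^ r ≤ (y ^ 2) ^ (1:ℝ) :=
            Real.rpow_le_rpow_of_exponent_ge (by positivity) (by nlinarith) hr
        _ = y ^ 2 := Real.rpow_one _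
  have h2r : t ^ (2 * r) = (t ^ r) ^ 2 := by
    rw [← Real.rpow_natCast (t ^ r) 2, ← Real.rpow_mul ht0, mul_comm]
    norm_num
  have hxyr0 : 0 ≤ x ^ r * y ^ r := mul_nonneg (Real.rpow_nonneg hx0 r) (Real.rpow_nonneg hy0 r)
  have hy2r0 : 0 ≤ (y ^ 2) ^ r := Real.rpow_nonneg (by positivity) r
  have key1 : (t ^ r) ^ 2 ≤ α * y ^ 2 := by
    have hsq : (t ^ r) ^ 2 ≤ (x ^ r * y ^ r) ^ 2 := by nlinarith
    have : (x ^ r * y ^ r) ^ 2 = (x ^ 2) ^ r * (y ^ 2) ^ r := by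
      rw [mul_pow, hxr, hyr]
    rw [this] at hsq
    nlinarith
  have hy21 : y ^ 2 ≤ 1 := by nlinarith
  have hy4 : y ^ 2 * y ^ 2 ≤ y ^ 2 := by nlinarith [hy21, sq_nonneg y]
  have key2 : α * y ^ 2 ≤ (a' + y ^ 2) / 2 := by nlinarith [sq_nonneg (α - y ^ 2), hα, hy4]
  have key3 : t ^ r ≤ (α + y ^ 2) / 2 := by
    nlinarith [key1, sq_nonneg (α - y ^ 2), htr0, hα0, sq_nonneg y,
      sq_nonneg (t ^ r + (α + y ^ 2) / 2)]
  rw [h2r]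
  nlinarith [mul_le_mul_of_nonneg_left key3 htr0]


end Aux

theorem stmt_12 {H : Type*} [NormedAddCommGroup H] [InnerProductSpace ℂ H]
    [CompleteSpace H] (A Ad : H →L[ℂ] H) (hran : IsClosed (Set.range A))
    (h1 : A * Ad * A = A) (h2 : Ad * A * Ad = Ad)
    (h3 : adjoint (A * Ad) = A * Ad) (h4 : adjoint (Ad * A) = Ad * A)
    (lam r : ℝ) (hlam : lam ∈ Set.Icc (0:ℝ) 1) (hr : 1 ≤ r)
    (u : H) (hu : ‖u‖ = 1) :
    ‖⟪A u, u⟫_ℂ‖ ^ (2 * r) ≤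
      (lam / 2) *
          (⟪((CFC.sqrt (adjoint A * A)) ^ (4 * r) + (A * Ad) ^ r) u, u⟫_ℂ).re +
        ((1 - lam) / 2) * ‖⟪A u, u⟫_ℂ‖ ^ r *
          (⟪((CFC.sqrt (adjoint A * A)) ^ (2 * r) + (A * Ad) ^ r) u, u⟫_ℂ).re := by
  obtain ⟨hl0, hl1⟩ := hlam
  have hr0 : (0:ℝ) ≤ r := by linarith
  have hrne : r ≠ 0 := by linarith
  set S : H →L[ℂ] H := adjoint A * A with hSdef
  set P : H →L[ℂ] H := A * Ad with hPdef
  have hS0 : 0 ≤ S := by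
    rw [hSdef, ← star_eq_adjoint]
    exact star_mul_self_nonneg A
  have hPsa : IsSelfAdjoint P := isSelfAdjoint_iff'.mpr h3
  have hP2 : P * P = P := by rw [hPdef, ← mul_assoc, h1]
  have hPinner : ∀ v w : H, ⟪P v, w⟫_ℂ = ⟪v, P w⟫_ℂ := by
    intro v w
    conv_lhs => rw [← h3]
    rw [adjoint_inner_left]
  -- operator power rewrites
  have hsq : CFC.sqrt S = S ^ ((1:ℝ)/2) := CFC.sqrt_eq_rpow
  have hs2 : (CFC.sqrt S) ^ (2 * r) = S ^ r := by
    rw [hsq, CFC.rpow_rpow_of_exponent_nonneg S (1/2) (2*r) (by norm_num) (by linarith) hS0,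
      show (1/2 : ℝ) * (2*r) = r by ring]
  have hs4 : (CFC.sqrt S) ^ (4 * r) = S ^ (2 * r) := by
    rw [hsq, CFC.rpow_rpow_of_exponent_nonneg S (1/2) (4*r) (by norm_num) (by linarith) hS0,
      show (1/2 : ℝ) * (4*r) = 2*r by ring]
  have hPr : P ^ r = P := aux_idem_rpow P hPsa hP2 hrne
  -- inner product facts
  have hPA : P (A u) = A u := by rw [show P (A u) = (P * A) u from rfl, h1]
  have hinner : ⟪A u, u⟫_ℂ = ⟪A u, P u⟫_ℂ := by
    conv_lhs => rw [← hPA, hPinner]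
  have ht : ‖⟪A u, u⟫_ℂ‖ ≤ ‖A u‖ * ‖P u‖ := by
    rw [hinner]; exact norm_inner_le_norm _ _
  have hx2 : (⟪S u, u⟫_ℂ).re = ‖A u‖ ^ 2 := by
    rw [show S u = adjoint A (A u) from rfl, adjoint_inner_left]
    simpa using inner_self_eq_norm_sq (𝕜 := ℂ) (A u)
  have hy2 : (⟪P u, u⟫_ℂ).re = ‖P u‖ ^ 2 := by
    have h' : ⟪P u, u⟫_ℂ = ⟪P u, P u⟫_ℂ := by
      conv_lhs => rw [show P u = P (P u) from by rw [show P (P u) = (P * P) u from rfl, hP2], hPinner]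
    rw [h']
    simpa using inner_self_eq_norm_sq (𝕜 := ℂ) (P u)
  have hy1 : ‖P u‖ ≤ 1 := by
    have h2' : (⟪P u, u⟫_ℂ).re ≤ ‖⟪P u, u⟫_ℂ‖ := by
      calc (⟪P u, u⟫_ℂ).re ≤ |(⟪P u, u⟫_ℂ).re| := le_abs_self _
        _ ≤ ‖⟪P u, u⟫_ℂ‖ := by exact_mod_cast RCLike.abs_re_le_norm (⟪P u, u⟫_ℂ)
    have h3' : ‖⟪P u, u⟫_ℂ‖ ≤ ‖P u‖ * ‖u‖ := norm_inner_le_norm _ _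
    rw [hu] at h3'
    nlinarith [norm_nonneg (P u), hy2]
  -- Hölder–McCarthy applications
  have hHM1 := aux_holder_mccarthy S hS0 hr u hu
  have hHM2 := aux_holder_mccarthy (S ^ r) CFC.rpow_nonneg (p := 2) one_le_two u hu
  have hs2r : (S ^ r) ^ (2:ℝ) = S ^ (2 * r) := by
    rw [CFC.rpow_rpow_of_exponent_nonneg S r 2 hr0 (by norm_num) hS0, mul_comm]
  rw [hs2r, Real.rpow_two] at hHM2
  have hcr : (‖A u‖ ^ 2) ^ r ≤ (⟪(S ^ r) u, u⟫_ℂ).re := by rw [← hx2]; exact hHM1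
  rw [hs4, hs2, hPr, aux_inner_add, aux_inner_add, hy2]
  exact aux_scalar (norm_nonneg _) (norm_nonneg _) (norm_nonneg _) hy1 ht hcr hHM2 hr hl0 hl1
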